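/- Let Γ be a commutative thick weakly distance-regular digraph in which C(q) exists and Γ_{1,q-1}^2 = {Γ_{1,q-2}, Γ_{2,q-1}}. Then: (i) for 2 ≤ i ≤ q-1, Γ_{1,q-1}^{2i-1} = Γ_{1,q-2}^{i-1}Γ_{1,q-1} = {Γ_{i,q-i}}; (ii) for 2 ≤ i ≤ q-2, Γ_{1,q-1}^{2i} = Γ_{1,q-2}^{i-1}Γ_{1,q-1}^2 = {Γ_{i,q-i-1}, Γ_{i+1,q-i}}. -/

import Mathlib

variable {V : Type*}

def HasWalk (adj : V → V → Prop) (x y : V) (n : ℕ) : Prop :=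
  ∃ f : ℕ → V, f 0 = x ∧ f n = y ∧ ∀ i < n, adj (f i) (f (i + 1))

/-- Directed distance `∂(x,y)`. -/
noncomputable def ddist (adj : V → V → Prop) (x y : V) : ℕ :=
  sInf {n | HasWalk adj x y n}

/-- Two-way distance `∂̃(x,y) = (∂(x,y), ∂(y,x))`. -/
noncomputable def tdist (adj : V → V → Prop) (x y : V) : ℕ × ℕ :=
  (ddist adj x y, ddist adj y x)

/-- The pair `i` is an attained two-way distance, i.e. `i ∈ ∂̃(Γ)`. -/
def Attained (adj : V → V → Prop) (i : ℕ × ℕ) : Prop :=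
  ∃ x y : V, tdist adj x y = i

/-- Intersection number `p^h_{i,j}`: for attained `h` it is the common cardinality of
`{z | ∂̃(x,z) = i, ∂̃(z,y) = j}` over pairs with `∂̃(x,y) = h` (and `0` otherwise). -/
noncomputable def pnum (adj : V → V → Prop) (h i j : ℕ × ℕ) : ℕ :=
  sSup {n | ∃ x y : V, tdist adj x y = h ∧
    n = Set.ncard {z : V | tdist adj x z = i ∧ tdist adj z y = j}}

/-- Valency `k_i = |Γ_i(x)|`. -/
noncomputable def kval (adj : V → V → Prop) (i : ℕ × ℕ) : ℕ :=
  pnum adj (0, 0) i i.swap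

/-- Adjacency of the subdigraph `Δ_J`: arcs of type `(1, t-1)` for `t ∈ J`. -/
def deltaAdj (adj : V → V → Prop) (J : Set ℕ) (u v : V) : Prop :=
  ∃ t ∈ J, tdist adj u v = (1, t - 1)

def IsCircuit (adj : V → V → Prop) (s : ℕ) (f : ℕ → V) : Prop :=
  0 < s ∧ f s = f 0 ∧ ∀ i < s, adj (f i) (f (i + 1))

def IsStrong (adj : V → V → Prop) : Prop :=
  ∀ x y : V, ∃ n, HasWalk adj x y n

/-- Weakly distance-regular: the intersection numbers are well defined. -/
def IsWDR (adj : V → V → Prop) : Prop :=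
  ∀ (i j : ℕ × ℕ) (x y x' y' : V), tdist adj x y = tdist adj x' y' →
    Set.ncard {z : V | tdist adj x z = i ∧ tdist adj z y = j}
      = Set.ncard {z : V | tdist adj x' z = i ∧ tdist adj z y' = j}

/-- Thick: `p^h_{i,i}, p^h_{i,i*} ∈ {0, k_i}`. -/
def IsThick (adj : V → V → Prop) : Prop :=
  ∀ h i : ℕ × ℕ,
    (pnum adj h i i = 0 ∨ pnum adj h i i = kval adj i) ∧
    (pnum adj h i i.swap = 0 ∨ pnum adj h i i.swap = kval adj i)

def IsWDRThick (adj : V → V → Prop) : Prop :=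
  IsStrong adj ∧ IsWDR adj ∧ IsThick adj

/-- A commutative thick weakly distance-regular digraph. -/
structure CTWDR (V : Type*) [Fintype V] where
  adj : V → V → Prop
  loopless : ∀ v, ¬ adj v v
  strong : IsStrong adj
  wdr : IsWDR adj
  comm : ∀ (i j : ℕ × ℕ) (x y : V),
    Set.ncard {z : V | tdist adj x z = i ∧ tdist adj z y = j}
      = Set.ncard {z : V | tdist adj x z = j ∧ tdist adj z y = i}
  thick : IsThick adj

namespace CTWDR

variable {V : Type*} [Fintype V] (G : CTWDR V)

/-- Product `EF` of two sets of relations (relations identified with two-way distances). -/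
def prodS (E F : Set (ℕ × ℕ)) : Set (ℕ × ℕ) :=
  {h | ∃ i ∈ E, ∃ j ∈ F, pnum G.adj h i j ≠ 0}

/-- Powers `Γ_i^l` (with `Γ_i^0 = {Γ_{(0,0)}}` and `Γ_i^1 = {Γ_i}`). -/
def pow (i : ℕ × ℕ) : ℕ → Set (ℕ × ℕ)
  | 0 => {(0, 0)}
  | 1 => {i}
  | n + 2 => G.prodS (pow i (n + 1)) {i}

/-- The pair `(1, s-1)` is pure: every circuit of length `s` containing an arc of type
`(1, s-1)` consists of arcs of type `(1, s-1)`. -/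
def Pure (s : ℕ) : Prop :=
  ∀ f : ℕ → V, IsCircuit G.adj s f →
    (∃ i < s, tdist G.adj (f i) (f (i + 1)) = (1, s - 1)) →
    ∀ i < s, tdist G.adj (f i) (f (i + 1)) = (1, s - 1)

def Mixed (s : ℕ) : Prop := ¬ G.Pure s

/-- Configuration `C(q)` exists. -/
def Cexists (q : ℕ) : Prop :=
  pnum G.adj (1, q - 2) (1, q - 1) (1, q - 1) ≠ 0 ∧ G.Pure (q - 1)

/-- Configuration `D(q)` exists. -/
def Dexists (q : ℕ) : Prop :=
  pnum G.adj (1, q - 1) (1, q - 2) (q - 2, 1) ≠ 0 ∧ G.Pure (q - 1)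

/-- A closed set of relations: `Γ_{i*}Γ_j ⊆ F` for all `i, j ∈ F`. -/
def Closed (F : Set (ℕ × ℕ)) : Prop :=
  ∀ i ∈ F, ∀ j ∈ F, G.prodS {i.swap} {j} ⊆ F

/-- The minimal closed set `⟨F⟩` containing `F`. -/
def genClosed (F : Set (ℕ × ℕ)) : Set (ℕ × ℕ) :=
  ⋂₀ {C | F ⊆ C ∧ G.Closed C}

/-- The block `F_J(x)` of the closed set generated by `{Γ_{1,t-1}}_{t ∈ J}`. -/
def block (J : Set ℕ) (x : V) : Set V :=
  {y | tdist G.adj x y ∈ G.genClosed {i | ∃ t ∈ J, i = (1, t - 1)}}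

end CTWDR

/-!
Write `A = (1, q-1)`, `B = (1, q-2)` and `D = (2, q-1)`. Purity of `B` says that a `B`-walk of
length `n ≥ 1` followed by any walk back of length `q-1-n` is a circuit of `B`-arcs. Together with
thickness (when `∂̃(x,y) = B`, every `A`-out-neighbour of `x` is an `A`-in-neighbour of `y`) this
shows that `B`-walks of length `n ≤ q-2` end in `Γ_{n,q-n-1}`, and that a `B`-walk of length `n`
followed by an `A`-arc ends in `Γ_{n+1,q-n-1}`. The same thickness slides an `A`-walk of length
`2n+1` along a `B`-walk of length `n`: its end is an `A`-out-neighbour of the end of the `B`-walk,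
which gives (i). For (ii), an `A`-walk of length `2n` thus ends one step of `A² = {B, D}` after a
`B`-walk of length `n-1`; a `D`-step after a `B`-walk of length `m` ends in `Γ_{m+2,q-m-1}`, the
only alternative `Γ_{m+1,q-m-1}` being excluded by (i).
-/

section Walks

variable {V : Type*} {R S : V → V → Prop} {x y z : V} {m n : ℕ}

theorem hasWalk_zero_iff : HasWalk R x y 0 ↔ x = y := by
  constructor
  · rintro ⟨f, rfl, rfl, -⟩
    rfl
  · rintro rfl
    exact ⟨fun _ => x, rfl, rfl, by simp⟩

theorem hasWalk_succ_iff : HasWalk R x z (n + 1) ↔ ∃ y, HasWalk R x y n ∧ R y z := by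
  constructor
  · rintro ⟨f, rfl, rfl, hf⟩
    exact ⟨f n, ⟨f, rfl, rfl, fun i hi => hf i (by omega)⟩, hf n (by omega)⟩
  · rintro ⟨y, ⟨f, rfl, rfl, hf⟩, hyz⟩
    refine ⟨fun i => if i ≤ n then f i else z, by simp, by simp, fun i hi => ?_⟩
    rcases Nat.lt_succ_iff_lt_or_eq.1 hi with hi | rfl
    · simpa [hi.le, Nat.succ_le_of_lt hi] using hf i hi
    · simpa using hyz

theorem hasWalk_succ_iff' : HasWalk R x z (n + 1) ↔ ∃ y, R x y ∧ HasWalk R y z n := by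
  constructor
  · rintro ⟨f, rfl, rfl, hf⟩
    exact ⟨f 1, hf 0 n.succ_pos, fun i => f (i + 1), rfl, rfl, fun i hi => hf (i + 1) (by omega)⟩
  · rintro ⟨y, hxy, f, rfl, rfl, hf⟩
    refine ⟨fun | 0 => x | i + 1 => f i, rfl, rfl, ?_⟩
    rintro (_ | i) hi
    · exact hxy
    · exact hf i (by omega)

theorem hasWalk_one_iff : HasWalk R x y 1 ↔ R x y := by
  simp [hasWalk_succ_iff, hasWalk_zero_iff]

theorem HasWalk.append (hxy : HasWalk R x y m) (hyz : HasWalk R y z n) :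
    HasWalk R x z (m + n) := by
  induction n generalizing z with
  | zero => rwa [← hasWalk_zero_iff.1 hyz]
  | succ n ih =>
    obtain ⟨w, hyw, hwz⟩ := hasWalk_succ_iff.1 hyz
    exact hasWalk_succ_iff.2 ⟨w, ih hyw, hwz⟩

theorem HasWalk.mono (hRS : ∀ u v, R u v → S u v) (h : HasWalk R x y n) : HasWalk S x y n := by
  obtain ⟨f, hf0, hfn, hf⟩ := h
  exact ⟨f, hf0, hfn, fun i hi => hRS _ _ (hf i hi)⟩

theorem ddist_le_of_hasWalk (h : HasWalk R x y n) : ddist R x y ≤ n :=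
  Nat.sInf_le h

theorem ddist_self (x : V) : ddist R x x = 0 :=
  Nat.le_zero.1 (ddist_le_of_hasWalk (hasWalk_zero_iff.2 rfl))

theorem adj_of_ddist_eq_one (h : ddist R x y = 1) : R x y := by
  have hne : {n | HasWalk R x y n}.Nonempty :=
    Set.nonempty_iff_ne_empty.2 fun he => by simp [ddist, he] at h
  exact hasWalk_one_iff.1 (h ▸ Nat.sInf_mem hne)

theorem tdist_eq_iff {a b : ℕ} : tdist R x y = (a, b) ↔ ddist R x y = a ∧ ddist R y x = b :=
  Prod.ext_iff

theorem tdist_self (x : V) : tdist R x x = (0, 0) := by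
  simp [tdist, ddist_self]

namespace IsStrong

theorem hasWalk_ddist (hR : IsStrong R) (x y : V) : HasWalk R x y (ddist R x y) :=
  Nat.sInf_mem (hR x y)

theorem ddist_triangle (hR : IsStrong R) (x y z : V) : ddist R x z ≤ ddist R x y + ddist R y z :=
  ddist_le_of_hasWalk ((hR.hasWalk_ddist x y).append (hR.hasWalk_ddist y z))

theorem eq_of_ddist_eq_zero (hR : IsStrong R) (h : ddist R x y = 0) : x = y :=
  hasWalk_zero_iff.1 (h ▸ hR.hasWalk_ddist x y)

theorem exists_geodesic (hR : IsStrong R) (x y : V) :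
    ∃ f : ℕ → V, f 0 = x ∧ f (ddist R x y) = y ∧ (∀ i < ddist R x y, R (f i) (f (i + 1))) ∧
      ∀ i ≤ ddist R x y, ddist R (f i) y = ddist R x y - i := by
  obtain ⟨f, hf0, hfd, hf⟩ := hR.hasWalk_ddist x y
  refine ⟨f, hf0, hfd, hf, fun i hi => le_antisymm ?_ ?_⟩
  · refine ddist_le_of_hasWalk ⟨fun j => f (i + j), rfl, ?_, fun j hj => hf (i + j) (by omega)⟩
    simp only [Nat.add_sub_cancel' hi, hfd]
  · have hxi : ddist R x (f i) ≤ i :=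
      ddist_le_of_hasWalk ⟨f, hf0, rfl, fun j hj => hf j (by omega)⟩
    have := hR.ddist_triangle x (f i) y
    omega

end IsStrong

end Walks

namespace CTWDR

variable {V : Type*} [Fintype V] (G : CTWDR V) {x y z x₀ y₀ : V} {c h i j : ℕ × ℕ} {n : ℕ}

/-- The relation `Γ_c` of the paper. -/
def Rel (c : ℕ × ℕ) (x y : V) : Prop :=
  tdist G.adj x y = c

variable {G} in
theorem Rel.adj {t : ℕ} (h : G.Rel (1, t) x y) : G.adj x y :=
  adj_of_ddist_eq_one (tdist_eq_iff.1 h).1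

theorem ddist_le_of_hasWalk_rel {t : ℕ} (h : HasWalk (G.Rel (1, t)) x y n) : ddist G.adj x y ≤ n :=
  ddist_le_of_hasWalk (h.mono fun _ _ => Rel.adj)

theorem pnum_eq_ncard (hxy : tdist G.adj x y = h) (i j : ℕ × ℕ) :
    pnum G.adj h i j = {z | tdist G.adj x z = i ∧ tdist G.adj z y = j}.ncard := by
  have : {n | ∃ x' y' : V, tdist G.adj x' y' = h ∧
      n = {z | tdist G.adj x' z = i ∧ tdist G.adj z y' = j}.ncard} =
      {{z | tdist G.adj x z = i ∧ tdist G.adj z y = j}.ncard} := by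
    ext n
    constructor
    · rintro ⟨x', y', hxy', rfl⟩
      exact G.wdr i j x' y' x y (hxy'.trans hxy.symm)
    · rintro rfl
      exact ⟨x, y, hxy, rfl⟩
  rw [pnum, this, csSup_singleton]

theorem pnum_ne_zero_iff (hxy : tdist G.adj x y = h) :
    pnum G.adj h i j ≠ 0 ↔ ∃ z, tdist G.adj x z = i ∧ tdist G.adj z y = j := by
  rw [G.pnum_eq_ncard hxy, ← Nat.pos_iff_ne_zero, Set.ncard_pos]
  rfl

theorem exists_of_pnum_ne_zero (hp : pnum G.adj h i j ≠ 0) :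
    ∃ x y z, tdist G.adj x y = h ∧ tdist G.adj x z = i ∧ tdist G.adj z y = j := by
  obtain ⟨x, y, hxy⟩ : ∃ x y, tdist G.adj x y = h := by
    by_contra! hh
    exact hp (by simp [pnum, hh])
  obtain ⟨z, hxz, hzy⟩ := (G.pnum_ne_zero_iff hxy).1 hp
  exact ⟨x, y, z, hxy, hxz, hzy⟩

theorem attained_of_pnum_ne_zero (hp : pnum G.adj h i j ≠ 0) : Attained G.adj h :=
  let ⟨x, y, _, hxy, _⟩ := G.exists_of_pnum_ne_zero hp
  ⟨x, y, hxy⟩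

theorem mem_prodS {E F : Set (ℕ × ℕ)} : h ∈ G.prodS E F ↔
    ∃ x y z, tdist G.adj x y = h ∧ tdist G.adj x z ∈ E ∧ tdist G.adj z y ∈ F := by
  constructor
  · rintro ⟨i, hi, j, hj, hp⟩
    obtain ⟨x, y, z, hxy, rfl, rfl⟩ := G.exists_of_pnum_ne_zero hp
    exact ⟨x, y, z, hxy, hi, hj⟩
  · rintro ⟨x, y, z, hxy, hxz, hzy⟩
    exact ⟨_, hxz, _, hzy, (G.pnum_ne_zero_iff hxy).2 ⟨z, rfl, rfl⟩⟩

theorem kval_eq_ncard (i : ℕ × ℕ) (x : V) : kval G.adj i = {z | tdist G.adj x z = i}.ncard := by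
  rw [kval, G.pnum_eq_ncard (tdist_self x)]
  congr 1
  ext z
  exact ⟨And.left, fun hxz => ⟨hxz, congrArg Prod.swap hxz⟩⟩

theorem exists_tdist_eq (hc : Attained G.adj c) (x : V) : ∃ y, tdist G.adj x y = c := by
  obtain ⟨x₀, y₀, hc⟩ := hc
  have hpos : 0 < {z | tdist G.adj x₀ z = c}.ncard := (Set.ncard_pos (Set.toFinite _)).2 ⟨y₀, hc⟩
  rw [← G.kval_eq_ncard, G.kval_eq_ncard c x] at hpos
  exact (Set.ncard_pos (Set.toFinite _)).1 hpos

theorem exists_hasWalk_rel (hc : Attained G.adj c) (x : V) (n : ℕ) :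
    ∃ y, HasWalk (G.Rel c) x y n := by
  induction n with
  | zero => exact ⟨x, hasWalk_zero_iff.2 rfl⟩
  | succ n ih =>
    obtain ⟨y, hxy⟩ := ih
    obtain ⟨z, hyz⟩ := G.exists_tdist_eq hc y
    exact ⟨z, hasWalk_succ_iff.2 ⟨y, hxy, hyz⟩⟩

theorem tdist_eq_of_pnum_ne_zero {w : V} (hp : pnum G.adj h i i ≠ 0)
    (hxy : tdist G.adj x y = h) (hxw : tdist G.adj x w = i) : tdist G.adj w y = i := by
  have hk : pnum G.adj h i i = kval G.adj i := (G.thick h i).1.resolve_left hp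
  rw [G.pnum_eq_ncard hxy, G.kval_eq_ncard i x] at hk
  have heq := Set.eq_of_subset_of_ncard_le (fun z hz => hz.1) hk.ge
  exact (heq.symm ▸ hxw : w ∈ {z | tdist G.adj x z = i ∧ tdist G.adj z y = i}).2

theorem tdist_eq_of_path {m w : V} (hxm : tdist G.adj x m = i) (hmy : tdist G.adj m y = i)
    (hxw : tdist G.adj x w = i) : tdist G.adj w y = i :=
  G.tdist_eq_of_pnum_ne_zero ((G.pnum_ne_zero_iff rfl).2 ⟨m, hxm, hmy⟩) rfl hxw

theorem hasWalk_rel_of_tdist_eq (h₀ : HasWalk (G.Rel c) x₀ y₀ n)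
    (h : tdist G.adj x y = tdist G.adj x₀ y₀) : HasWalk (G.Rel c) x y n := by
  induction n generalizing y₀ y with
  | zero =>
    rw [← hasWalk_zero_iff.1 h₀, tdist_self, tdist_eq_iff] at h
    exact hasWalk_zero_iff.2 (G.strong.eq_of_ddist_eq_zero h.1)
  | succ n ih =>
    obtain ⟨w₀, hw₀, hw₀y₀⟩ := hasWalk_succ_iff.1 h₀
    obtain ⟨w, hxw, hwy⟩ := (G.pnum_ne_zero_iff h).1 ((G.pnum_ne_zero_iff rfl).2 ⟨w₀, rfl, hw₀y₀⟩)
    exact hasWalk_succ_iff.2 ⟨w, ih hw₀ hxw, hwy⟩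

theorem tdist_mem_pow : ∀ {n : ℕ} {x y : V}, HasWalk (G.Rel c) x y n → tdist G.adj x y ∈ G.pow c n
  | 0, x, y, hw => by
    rw [← hasWalk_zero_iff.1 hw, tdist_self]
    rfl
  | 1, x, y, hw => (hasWalk_one_iff.1 hw : G.Rel c x y)
  | n + 2, x, y, hw => by
    obtain ⟨z, hxz, hzy⟩ := hasWalk_succ_iff.1 hw
    exact G.mem_prodS.2 ⟨x, y, z, rfl, tdist_mem_pow hxz, hzy⟩

theorem exists_hasWalk_of_mem_pow (hc : Attained G.adj c) :
    ∀ {n : ℕ} {h : ℕ × ℕ}, h ∈ G.pow c n → ∃ x y, HasWalk (G.Rel c) x y n ∧ tdist G.adj x y = h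
  | 0, h, hh =>
    let ⟨x₀, _, _⟩ := hc
    ⟨x₀, x₀, hasWalk_zero_iff.2 rfl, (tdist_self x₀).trans hh.symm⟩
  | 1, h, hh =>
    let ⟨x₀, y₀, hc⟩ := hc
    ⟨x₀, y₀, hasWalk_one_iff.2 hc, hc.trans hh.symm⟩
  | n + 2, h, hh => by
    obtain ⟨x, y, z, hxy, hxz, hzy⟩ := G.mem_prodS.1 hh
    obtain ⟨x', z', hw', hxz'⟩ := exists_hasWalk_of_mem_pow hc hxz
    exact ⟨x, y, hasWalk_succ_iff.2 ⟨z, G.hasWalk_rel_of_tdist_eq hw' hxz'.symm, hzy⟩, hxy⟩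

theorem hasWalk_rel_iff_mem_pow (hc : Attained G.adj c) :
    HasWalk (G.Rel c) x y n ↔ tdist G.adj x y ∈ G.pow c n := by
  refine ⟨G.tdist_mem_pow, fun hh => ?_⟩
  obtain ⟨x', y', hw', hxy'⟩ := G.exists_hasWalk_of_mem_pow hc hh
  exact G.hasWalk_rel_of_tdist_eq hw' hxy'.symm

theorem pow_eq_singleton (hc : Attained G.adj c)
    (hall : ∀ x y, HasWalk (G.Rel c) x y n → tdist G.adj x y = h) : G.pow c n = {h} := by
  ext h'
  constructor
  · intro hh
    obtain ⟨x, y, hw, rfl⟩ := G.exists_hasWalk_of_mem_pow hc hh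
    exact hall x y hw
  · rintro rfl
    obtain ⟨x₀, y₀, hxy₀⟩ := hc
    obtain ⟨y, hw⟩ := G.exists_hasWalk_rel ⟨x₀, y₀, hxy₀⟩ x₀ n
    exact hall x₀ y hw ▸ G.tdist_mem_pow hw

theorem pnum_ne_zero_of_mem_pow_two (hh : h ∈ G.pow c 2) : pnum G.adj h c c ≠ 0 := by
  obtain ⟨_, rfl, _, rfl, hp⟩ := hh
  exact hp

variable {G} {b : V} {f : ℕ → V} {q s m k : ℕ}

theorem Pure.rel_of_closes (hP : G.Pure s) (hm : 0 < m) (hxy : HasWalk (G.Rel (1, s - 1)) x y m)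
    (hf0 : f 0 = y) (hfk : f k = x) (hf : ∀ i < k, G.adj (f i) (f (i + 1))) (hs : m + k = s) :
    ∀ i < k, G.Rel (1, s - 1) (f i) (f (i + 1)) := by
  obtain ⟨g, hg0, hgm, hg⟩ := hxy
  set c : ℕ → V := fun i => if i ≤ m then g i else f (i - m)
  have hc_left : ∀ i ≤ m, c i = g i := fun i hi => if_pos hi
  have hc_right : ∀ i, c (m + i) = f i := by
    rintro (_ | i)
    · simp [c, hgm, hf0]
    · simp [c]
  have hcirc : IsCircuit G.adj s c := by
    refine ⟨by omega, by rw [← hs, hc_right, hfk, hc_left 0 m.zero_le, hg0], fun i hi => ?_⟩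
    rcases lt_or_ge i m with him | him
    · rw [hc_left i him.le, hc_left (i + 1) him]
      exact (hg i him).adj
    · obtain ⟨j, rfl⟩ := Nat.exists_eq_add_of_le him
      rw [hc_right, Nat.add_assoc, hc_right]
      exact hf j (by omega)
  have hB : ∃ i < s, tdist G.adj (c i) (c (i + 1)) = (1, s - 1) :=
    ⟨0, by omega, by rw [hc_left 0 m.zero_le, hc_left 1 hm]; exact hg 0 hm⟩
  intro i hi
  have := hP c hcirc hB (m + i) (by omega)
  rwa [hc_right, Nat.add_assoc, hc_right] at this

theorem Pure.rel_of_adj (hP : G.Pure s) (hm : 0 < m) (hxy : HasWalk (G.Rel (1, s - 1)) x y m)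
    (hyz : G.adj y z) (hzx : HasWalk G.adj z x k) (hs : m + (k + 1) = s) :
    G.Rel (1, s - 1) y z := by
  obtain ⟨g, rfl, hgk, hg⟩ := hzx
  refine hP.rel_of_closes hm hxy (f := fun | 0 => y | i + 1 => g i) rfl hgk ?_ hs 0 k.succ_pos
  rintro (_ | i) hi
  · exact hyz
  · exact hg i (by omega)

theorem Cexists.attained_B (hC : G.Cexists q) : Attained G.adj (1, q - 2) :=
  G.attained_of_pnum_ne_zero hC.1

theorem Cexists.attained_A (hC : G.Cexists q) : Attained G.adj (1, q - 1) := by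
  obtain ⟨x, -, z, -, hxz, -⟩ := G.exists_of_pnum_ne_zero hC.1
  exact ⟨x, z, hxz⟩

theorem Cexists.tdist_A_of_B (hC : G.Cexists q) {w : V} (hxy : tdist G.adj x y = (1, q - 2))
    (hxw : tdist G.adj x w = (1, q - 1)) : tdist G.adj w y = (1, q - 1) :=
  G.tdist_eq_of_pnum_ne_zero hC.1 hxy hxw

theorem Cexists.hasWalk_A_of_hasWalk_B (hC : G.Cexists q)
    (h : HasWalk (G.Rel (1, q - 2)) x y n) : HasWalk (G.Rel (1, q - 1)) x y (2 * n) := by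
  induction n generalizing y with
  | zero => exact hasWalk_zero_iff.2 (hasWalk_zero_iff.1 h)
  | succ n ih =>
    obtain ⟨w, hxw, hwy⟩ := hasWalk_succ_iff.1 h
    obtain ⟨u, hwu, huy⟩ := (G.pnum_ne_zero_iff hwy).1 hC.1
    exact (ih hxw).append (hasWalk_succ_iff.2 ⟨u, hasWalk_one_iff.2 hwu, huy⟩)

theorem Cexists.exists_pure_geodesic (hC : G.Cexists q) (hn : 0 < n)
    (hxy : HasWalk (G.Rel (1, q - 2)) x y n) (hyx : ddist G.adj y x = k) (hnk : n + k = q - 1) :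
    ∃ f : ℕ → V, f 0 = y ∧ f k = x ∧ (∀ i < k, G.Rel (1, q - 2) (f i) (f (i + 1))) ∧
      ∀ i ≤ k, ddist G.adj (f i) x = k - i := by
  subst hyx
  obtain ⟨f, hf0, hfk, hf, hfd⟩ := G.strong.exists_geodesic y x
  exact ⟨f, hf0, hfk, hC.2.rel_of_closes hn hxy hf0 hfk hf hnk, hfd⟩

theorem Cexists.tdist_of_hasWalk_B (hC : G.Cexists q) (hn : 0 < n) (hnq : n ≤ q - 2)
    (hxy : HasWalk (G.Rel (1, q - 2)) x y n) : tdist G.adj x y = (n, q - n - 1) := by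
  induction n generalizing y with
  | zero => omega
  | succ n ih =>
    obtain ⟨w, hxw, hwy⟩ := hasWalk_succ_iff.1 hxy
    rcases Nat.eq_zero_or_pos n with rfl | hn
    · rw [← hasWalk_zero_iff.1 hxw] at hwy
      exact hwy
    obtain ⟨dxw, dwx⟩ := tdist_eq_iff.1 (ih hn (by omega) hxw)
    obtain ⟨f, rfl, -, hf, hfd⟩ := hC.exists_pure_geodesic hn hxw dwx (by omega)
    have hyf₂ : tdist G.adj y (f 2) = (1, q - 2) :=
      G.tdist_eq_of_path (hf 0 (by omega)) (hf 1 (by omega)) hwy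
    obtain ⟨x₁, hxx₁, hx₁y⟩ := hasWalk_succ_iff'.1 hxy
    have := G.ddist_le_of_hasWalk_rel hx₁y
    have := G.ddist_le_of_hasWalk_rel hxy
    have := hfd 2 (by omega)
    have := tdist_eq_iff.1 hyf₂
    have := tdist_eq_iff.1 hxx₁
    have := G.strong.ddist_triangle y (f 2) x
    have := G.strong.ddist_triangle x₁ y x
    have := G.strong.ddist_triangle (f 2) x y
    rw [tdist_eq_iff]
    omega

theorem Cexists.tdist_of_hasWalk_B_of_A (hC : G.Cexists q) (hn : 0 < n) (hnq : n ≤ q - 2)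
    (hxy : HasWalk (G.Rel (1, q - 2)) x y n) (hyz : tdist G.adj y z = (1, q - 1)) :
    tdist G.adj x z = (n + 1, q - (n + 1)) := by
  obtain ⟨dxy, dyx⟩ := tdist_eq_iff.1 (hC.tdist_of_hasWalk_B hn hnq hxy)
  obtain ⟨f, rfl, -, hf, hfd⟩ := hC.exists_pure_geodesic hn hxy dyx (by omega)
  have hzf₁ : tdist G.adj z (f 1) = (1, q - 1) := hC.tdist_A_of_B (hf 0 (by omega)) hyz
  -- a shorter way back from `z` would close a circuit of length `q - 1` through the `A`-arc
  have hzx : ddist G.adj z x ≠ q - 2 - n := by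
    intro h
    have := hC.2.rel_of_adj hn hxy (Rel.adj hyz) (h ▸ G.strong.hasWalk_ddist z x) (by omega)
    have := congrArg Prod.snd (hyz.symm.trans this)
    simp only at this
    omega
  have := hfd 1 (by omega)
  have := tdist_eq_iff.1 hzf₁
  have := tdist_eq_iff.1 hyz
  have := G.strong.ddist_triangle z (f 1) x
  have := G.strong.ddist_triangle (f 0) z x
  have := G.strong.ddist_triangle x (f 0) z
  have := G.strong.ddist_triangle (f 1) x z
  rw [tdist_eq_iff]
  omega

theorem Cexists.tdist_A_of_hasWalk (hC : G.Cexists q)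
    (hxz : HasWalk (G.Rel (1, q - 1)) x z (2 * n + 1))
    (hxb : HasWalk (G.Rel (1, q - 2)) x b n) : tdist G.adj b z = (1, q - 1) := by
  induction n generalizing x with
  | zero => exact hasWalk_zero_iff.1 hxb ▸ (hasWalk_one_iff.1 hxz : G.Rel _ x z)
  | succ n ih =>
    rw [show 2 * (n + 1) + 1 = 2 * n + 1 + 1 + 1 by ring] at hxz
    obtain ⟨v₁, hxv₁, hv₁z⟩ := hasWalk_succ_iff'.1 hxz
    obtain ⟨v₂, hv₁v₂, hv₂z⟩ := hasWalk_succ_iff'.1 hv₁z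
    obtain ⟨v₃, hv₂v₃, hv₃z⟩ := hasWalk_succ_iff'.1 hv₂z
    obtain ⟨x₁, hxx₁, hx₁b⟩ := hasWalk_succ_iff'.1 hxb
    have hv₁x₁ : tdist G.adj v₁ x₁ = (1, q - 1) := hC.tdist_A_of_B hxx₁ hxv₁
    have hx₁v₃ : tdist G.adj x₁ v₃ = (1, q - 1) := G.tdist_eq_of_path hv₁v₂ hv₂v₃ hv₁x₁
    exact ih (hasWalk_succ_iff'.2 ⟨v₃, hx₁v₃, hv₃z⟩) hx₁b

theorem Cexists.pow_B (hC : G.Cexists q) (hn : 0 < n) (hnq : n ≤ q - 2) :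
    G.pow (1, q - 2) n = {(n, q - n - 1)} :=
  G.pow_eq_singleton hC.attained_B fun _ _ => hC.tdist_of_hasWalk_B hn hnq

theorem Cexists.hasWalk_B_iff (hC : G.Cexists q) (hn : 0 < n) (hnq : n ≤ q - 2) :
    HasWalk (G.Rel (1, q - 2)) x y n ↔ tdist G.adj x y = (n, q - n - 1) := by
  rw [G.hasWalk_rel_iff_mem_pow hC.attained_B, hC.pow_B hn hnq, Set.mem_singleton_iff]

theorem Cexists.pow_A_odd (hC : G.Cexists q) (hn : 0 < n) (hnq : n ≤ q - 2) :
    G.pow (1, q - 1) (2 * n + 1) = {(n + 1, q - (n + 1))} := by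
  refine G.pow_eq_singleton hC.attained_A fun x z hxz => ?_
  obtain ⟨b, hxb⟩ := G.exists_hasWalk_rel hC.attained_B x n
  exact hC.tdist_of_hasWalk_B_of_A hn hnq hxb (hC.tdist_A_of_hasWalk hxz hxb)

theorem Cexists.tdist_of_hasWalk_B_of_D (hC : G.Cexists q)
    (hD : pnum G.adj (2, q - 1) (1, q - 1) (1, q - 1) ≠ 0) (hn : 0 < n) (hnq : n ≤ q - 3)
    (hxb : HasWalk (G.Rel (1, q - 2)) x b n) (hbz : tdist G.adj b z = (2, q - 1)) :
    tdist G.adj x z = (n + 2, q - (n + 1)) := by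
  obtain ⟨y, hby⟩ := G.exists_tdist_eq hC.attained_B b
  obtain ⟨v, hbv⟩ := G.exists_tdist_eq hC.attained_A b
  obtain ⟨a, hya⟩ := G.exists_tdist_eq hC.attained_A y
  have hza : tdist G.adj z a = (1, q - 1) :=
    G.tdist_eq_of_path (hC.tdist_A_of_B hby hbv) hya (G.tdist_eq_of_pnum_ne_zero hD hbz hbv)
  have hxa : tdist G.adj x a = (n + 2, q - (n + 2)) :=
    hC.tdist_of_hasWalk_B_of_A (by omega) (by omega) (hasWalk_succ_iff.2 ⟨b, hxb, hby⟩) hya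
  have := tdist_eq_iff.1 (hC.tdist_of_hasWalk_B hn (by omega) hxb)
  have := tdist_eq_iff.1 hbz
  have := tdist_eq_iff.1 hza
  have := tdist_eq_iff.1 hxa
  have := G.strong.ddist_triangle z x b
  have := G.strong.ddist_triangle z a x
  have := G.strong.ddist_triangle x b z
  have := G.strong.ddist_triangle x z a
  have hzx : ddist G.adj z x = q - (n + 1) := by omega
  -- by the odd case, `∂̃(x, z) = (n + 1, q - (n + 1))` would make `∂̃(b, z) = A`
  have hxz : ddist G.adj x z ≠ n + 1 := by
    intro h
    have hw : HasWalk (G.Rel (1, q - 1)) x z (2 * n + 1) := by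
      rw [G.hasWalk_rel_iff_mem_pow hC.attained_A, hC.pow_A_odd hn (by omega)]
      exact tdist_eq_iff.2 ⟨h, hzx⟩
    have := congrArg Prod.fst ((hC.tdist_A_of_hasWalk hw hxb).symm.trans hbz)
    simp at this
  rw [tdist_eq_iff]
  omega

theorem Cexists.tdist_of_hasWalk_A_even (hC : G.Cexists q)
    (h2 : G.pow (1, q - 1) 2 = ({(1, q - 2), (2, q - 1)} : Set (ℕ × ℕ)))
    (hn : 2 ≤ n) (hnq : n ≤ q - 2) (hxz : HasWalk (G.Rel (1, q - 1)) x z (2 * n)) :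
    tdist G.adj x z = (n, q - n - 1) ∨ tdist G.adj x z = (n + 1, q - n) := by
  obtain ⟨m, rfl⟩ : ∃ m, n = m + 1 := ⟨n - 1, by omega⟩
  obtain ⟨v, hxv, hvz⟩ := hasWalk_succ_iff.1 hxz
  obtain ⟨b, hxb⟩ := G.exists_hasWalk_rel hC.attained_B x m
  have hbv := hC.tdist_A_of_hasWalk hxv hxb
  have hbz : tdist G.adj b z ∈ G.pow (1, q - 1) 2 :=
    G.tdist_mem_pow (hasWalk_succ_iff.2 ⟨v, hasWalk_one_iff.2 hbv, hvz⟩)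
  rw [h2] at hbz
  rcases hbz with hbz | hbz
  · exact .inl (hC.tdist_of_hasWalk_B (by omega) hnq (hasWalk_succ_iff.2 ⟨b, hxb, hbz⟩))
  · have hD := G.pnum_ne_zero_of_mem_pow_two (h := (2, q - 1)) (by rw [h2]; exact .inr rfl)
    exact .inr (hC.tdist_of_hasWalk_B_of_D hD (by omega) (by omega) hxb hbz)

theorem Cexists.pow_A_two_mul_sub_one (hC : G.Cexists q) {i : ℕ} (hi : 2 ≤ i) (hiq : i ≤ q - 1) :
    G.pow (1, q - 1) (2 * i - 1) = {(i, q - i)} := by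
  obtain ⟨n, rfl⟩ : ∃ n, i = n + 1 := ⟨i - 1, by omega⟩
  exact hC.pow_A_odd (by omega) (by omega)

theorem Cexists.prodS_pow_B_A (hC : G.Cexists q) {i : ℕ} (hi : 2 ≤ i) (hiq : i ≤ q - 1) :
    G.prodS (G.pow (1, q - 2) (i - 1)) {(1, q - 1)} = {(i, q - i)} := by
  obtain ⟨n, rfl⟩ : ∃ n, i = n + 1 := ⟨i - 1, by omega⟩
  rw [Nat.add_sub_cancel, hC.pow_B (by omega) (by omega)]
  ext h
  simp only [G.mem_prodS, Set.mem_singleton_iff]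
  constructor
  · rintro ⟨x, y, z, rfl, hxz, hzy⟩
    exact hC.tdist_of_hasWalk_B_of_A (by omega) (by omega)
      ((hC.hasWalk_B_iff (by omega) (by omega)).2 hxz) hzy
  · rintro rfl
    obtain ⟨x, -, -⟩ := hC.attained_B
    obtain ⟨z, hxz⟩ := G.exists_hasWalk_rel hC.attained_B x n
    obtain ⟨y, hzy⟩ := G.exists_tdist_eq hC.attained_A z
    exact ⟨x, y, z, hC.tdist_of_hasWalk_B_of_A (by omega) (by omega) hxz hzy,
      hC.tdist_of_hasWalk_B (by omega) (by omega) hxz, hzy⟩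

theorem Cexists.pow_A_two_mul (hC : G.Cexists q)
    (h2 : G.pow (1, q - 1) 2 = ({(1, q - 2), (2, q - 1)} : Set (ℕ × ℕ)))
    {i : ℕ} (hi : 2 ≤ i) (hiq : i ≤ q - 2) :
    G.pow (1, q - 1) (2 * i) = ({(i, q - i - 1), (i + 1, q - i)} : Set (ℕ × ℕ)) := by
  have hD := G.pnum_ne_zero_of_mem_pow_two (h := (2, q - 1)) (by rw [h2]; exact .inr rfl)
  ext h
  constructor
  · intro hh
    obtain ⟨x, z, hxz, rfl⟩ := G.exists_hasWalk_of_mem_pow hC.attained_A hh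
    exact hC.tdist_of_hasWalk_A_even h2 hi hiq hxz
  · obtain ⟨x, -, -⟩ := hC.attained_B
    rintro (rfl | rfl)
    · obtain ⟨y, hxy⟩ := G.exists_hasWalk_rel hC.attained_B x i
      exact hC.tdist_of_hasWalk_B (by omega) hiq hxy ▸
        G.tdist_mem_pow (hC.hasWalk_A_of_hasWalk_B hxy)
    · obtain ⟨n, rfl⟩ : ∃ n, i = n + 1 := ⟨i - 1, by omega⟩
      obtain ⟨b, hxb⟩ := G.exists_hasWalk_rel hC.attained_B x n
      obtain ⟨u, hbu⟩ := G.exists_tdist_eq (G.attained_of_pnum_ne_zero hD) b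
      obtain ⟨w, hbw, hwu⟩ := (G.pnum_ne_zero_iff hbu).1 hD
      have hxu : HasWalk (G.Rel (1, q - 1)) x u (2 * (n + 1)) :=
        (hC.hasWalk_A_of_hasWalk_B hxb).append (hasWalk_succ_iff.2 ⟨w, hasWalk_one_iff.2 hbw, hwu⟩)
      exact hC.tdist_of_hasWalk_B_of_D hD (by omega) (by omega) hxb hbu ▸ G.tdist_mem_pow hxu

theorem Cexists.prodS_pow_B_pow_A_two (hC : G.Cexists q)
    (h2 : G.pow (1, q - 1) 2 = ({(1, q - 2), (2, q - 1)} : Set (ℕ × ℕ)))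
    {i : ℕ} (hi : 2 ≤ i) (hiq : i ≤ q - 2) :
    G.prodS (G.pow (1, q - 2) (i - 1)) (G.pow (1, q - 1) 2) =
      ({(i, q - i - 1), (i + 1, q - i)} : Set (ℕ × ℕ)) := by
  have hD := G.pnum_ne_zero_of_mem_pow_two (h := (2, q - 1)) (by rw [h2]; exact .inr rfl)
  obtain ⟨n, rfl⟩ : ∃ n, i = n + 1 := ⟨i - 1, by omega⟩
  rw [Nat.add_sub_cancel, hC.pow_B (by omega) (by omega), h2]
  ext h
  simp only [G.mem_prodS, Set.mem_singleton_iff, Set.mem_insert_iff]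
  constructor
  · rintro ⟨x, y, z, rfl, hxz, hzy | hzy⟩
    · have hxy := hasWalk_succ_iff.2 ⟨z, (hC.hasWalk_B_iff (by omega) (by omega)).2 hxz, hzy⟩
      exact .inl (hC.tdist_of_hasWalk_B (by omega) hiq hxy)
    · exact .inr (hC.tdist_of_hasWalk_B_of_D hD (by omega) (by omega)
        ((hC.hasWalk_B_iff (by omega) (by omega)).2 hxz) hzy)
  · obtain ⟨x, -, -⟩ := hC.attained_B
    obtain ⟨z, hxz⟩ := G.exists_hasWalk_rel hC.attained_B x n
    have hxz' := hC.tdist_of_hasWalk_B (by omega) (by omega) hxz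
    rintro (rfl | rfl)
    · obtain ⟨y, hzy⟩ := G.exists_tdist_eq hC.attained_B z
      exact ⟨x, y, z, hC.tdist_of_hasWalk_B (by omega) hiq (hasWalk_succ_iff.2 ⟨z, hxz, hzy⟩),
        hxz', .inl hzy⟩
    · obtain ⟨y, hzy⟩ := G.exists_tdist_eq (G.attained_of_pnum_ne_zero hD) z
      exact ⟨x, y, z, hC.tdist_of_hasWalk_B_of_D hD (by omega) (by omega) hxz hzy, hxz', .inr hzy⟩

end CTWDR

/-- Lemma 2.6: if `C(q)` exists and `Γ_{1,q-1}^2 = {Γ_{1,q-2}, Γ_{2,q-1}}`,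
then (i) `Γ_{1,q-1}^{2i-1} = Γ_{1,q-2}^{i-1}Γ_{1,q-1} = {Γ_{i,q-i}}` for `2 ≤ i ≤ q-1`, and
(ii) `Γ_{1,q-1}^{2i} = Γ_{1,q-2}^{i-1}Γ_{1,q-1}^2 = {Γ_{i,q-i-1}, Γ_{i+1,q-i}}` for `2 ≤ i ≤ q-2`. -/
theorem stmt7 {V : Type*} [Fintype V] (G : CTWDR V) (q : ℕ) (hC : G.Cexists q)
    (h2 : G.pow (1, q - 1) 2 = ({(1, q - 2), (2, q - 1)} : Set (ℕ × ℕ))) :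
    (∀ i, 2 ≤ i → i ≤ q - 1 →
      G.pow (1, q - 1) (2 * i - 1) = {(i, q - i)} ∧
      G.prodS (G.pow (1, q - 2) (i - 1)) {(1, q - 1)} = {(i, q - i)}) ∧
    (∀ i, 2 ≤ i → i ≤ q - 2 →
      G.pow (1, q - 1) (2 * i) = ({(i, q - i - 1), (i + 1, q - i)} : Set (ℕ × ℕ)) ∧
      G.prodS (G.pow (1, q - 2) (i - 1)) (G.pow (1, q - 1) 2)
        = ({(i, q - i - 1), (i + 1, q - i)} : Set (ℕ × ℕ))) :=
  ⟨fun _ hi hiq => ⟨hC.pow_A_two_mul_sub_one hi hiq, hC.prodS_pow_B_A hi hiq⟩,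
    fun _ hi hiq => ⟨hC.pow_A_two_mul h2 hi hiq, hC.prodS_pow_B_pow_A_two h2 hi hiq⟩⟩
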